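/- arXiv:math/0602538 — 3 statements merged into one kernel-verified Lean document; each statement's English description precedes it below -/
import Mathlib

section
/- Let Φ: ℝ^p × ℝ^q → ℝ^{p+q} be the map sending coefficient vectors (a,b) of monic polynomials P_a(z) = z^p + Σ a_i z^{p-i} and Q_b(z) = z^q + Σ b_j z^{q-j} to the coefficient vector c of their product R_c = P_a Q_b. Then the Jacobian determinant of Φ at (a,b) equals, up to sign, the resultant of P_a and Q_b. -/
/-!
Writing `P_a = X^p + A_a` and `Q_b = X^q + B_b` with `A`, `B` linear in the coefficients,
`Φ(a, b)` is a constant plus a linear plus a bilinear function of `(a, b)`, so its derivative at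
`(a, b)` sends `(α, β)` to the coefficients of `A_α Q_b + P_a B_β`. On the basis vectors this is
`X^{p-1-i} Q_b` and `X^{q-1-j} P_a`, which are precisely the rows of the Sylvester matrix. Hence
the Jacobian matrix is the transpose of the Sylvester matrix with its two row blocks swapped, and
its determinant is the resultant up to the sign of that permutation.
-/

open Polynomial

/-- The monic polynomial `z^n + a_1 z^{n-1} + ... + a_n` associated to a coefficient
vector `a ∈ ℝ^n`. -/
noncomputable def monicOfCoeffs (n : ℕ) (a : Fin n → ℝ) : Polynomial ℝ :=
  Polynomial.X ^ n + ∑ i : Fin n, Polynomial.C (a i) * Polynomial.X ^ (n - 1 - (i : ℕ))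

/-- The Sylvester matrix of a pair of monic polynomials `P` (degree `p`) and `Q`
(degree `q`): the first `q` rows carry the shifted coefficient sequences of `P`
(in decreasing-degree order), the last `p` rows those of `Q`. -/
noncomputable def sylvesterMat (p q : ℕ) (P Q : Polynomial ℝ) :
    Matrix (Fin (p + q)) (Fin (p + q)) ℝ := fun i j =>
  if (i : ℕ) < q then
    (if (i : ℕ) ≤ (j : ℕ) ∧ (j : ℕ) ≤ (i : ℕ) + p then
      P.coeff (p - ((j : ℕ) - (i : ℕ))) else 0)
  else
    (if (i : ℕ) - q ≤ (j : ℕ) ∧ (j : ℕ) ≤ ((i : ℕ) - q) + q then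
      Q.coeff (q - ((j : ℕ) - ((i : ℕ) - q))) else 0)

/-- The multiplication map on coefficient vectors: `(a, b) ↦ c` where
`P_a · Q_b = R_c`.  Here the domain `ℝ^p × ℝ^q` is identified with `ℝ^{p+q}`. -/
noncomputable def coeffMulMap (p q : ℕ) : (Fin (p + q) → ℝ) → (Fin (p + q) → ℝ) :=
  fun v k =>
    (monicOfCoeffs p (fun i => v (Fin.castAdd q i)) *
      monicOfCoeffs q (fun j => v (Fin.natAdd p j))).coeff (p + q - 1 - (k : ℕ))

open scoped Matrix

section ProductRule

variable {𝕜 A E F : Type*} [NontriviallyNormedField 𝕜] [CompleteSpace 𝕜] [Ring A] [Algebra 𝕜 A]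
  [NormedAddCommGroup E] [NormedSpace 𝕜 E] [FiniteDimensional 𝕜 E]
  [NormedAddCommGroup F] [NormedSpace 𝕜 F]

/- `A` carries no topology: the linear and bilinear parts of the map are continuous because
their source `E` is finite-dimensional. -/
theorem hasFDerivAt_linearMap_affine_mul (ℓ : A →ₗ[𝕜] F) (L₁ L₂ : E →ₗ[𝕜] A) (a₀ b₀ : A)
    (v : E) :
    HasFDerivAt (fun w => ℓ ((a₀ + L₁ w) * (b₀ + L₂ w)))
      (ℓ ∘ₗ (LinearMap.mulRight 𝕜 (b₀ + L₂ v) ∘ₗ L₁ +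
        LinearMap.mulLeft 𝕜 (a₀ + L₁ v) ∘ₗ L₂)).toContinuousLinearMap v := by
  set M := (((LinearMap.mul 𝕜 A).compl₁₂ L₁ L₂).compr₂ ℓ).toContinuousBilinearMap
  set T := (ℓ ∘ₗ (LinearMap.mulRight 𝕜 b₀ ∘ₗ L₁ +
    LinearMap.mulLeft 𝕜 a₀ ∘ₗ L₂)).toContinuousLinearMap
  have hM (x y : E) : M x y = ℓ (L₁ x * L₂ y) := rfl
  have hT (w : E) : T w = ℓ (L₁ w * b₀) + ℓ (a₀ * L₂ w) := map_add ℓ _ _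
  have hsplit : (fun w => ℓ ((a₀ + L₁ w) * (b₀ + L₂ w))) =
      fun w => ℓ (a₀ * b₀) + T w + M w w := by
    funext w
    simp only [hT, hM, mul_add, add_mul, map_add, add_assoc]
  rw [hsplit]
  refine (((hasFDerivAt_const (ℓ (a₀ * b₀)) v).add T.hasFDerivAt).add
    (M.hasFDerivAt_of_bilinear (hasFDerivAt_id v) (hasFDerivAt_id v))).congr_fderiv ?_
  ext h
  simp [hT, hM, mul_add, add_mul, add_assoc, add_left_comm, add_comm]

end ProductRule

theorem LinearMap.funLeft_single_of_injective {R M ι κ : Type*} [Semiring R] [AddCommMonoid M]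
    [Module R M] [DecidableEq ι] [DecidableEq κ] {f : κ → ι} (hf : Function.Injective f)
    (i : κ) (x : M) : funLeft R M f (Pi.single (f i) x) = Pi.single i x := by
  funext a
  simp [Pi.single_apply, hf.eq_iff]

theorem LinearMap.funLeft_single_of_forall_ne {R M ι κ : Type*} [Semiring R] [AddCommMonoid M]
    [Module R M] [DecidableEq ι] {f : κ → ι} {i : ι} (hf : ∀ a, f a ≠ i) (x : M) :
    funLeft R M f (Pi.single i x) = 0 := by
  funext a
  simp [hf a]

theorem Fin.castAdd_ne_natAdd {m n : ℕ} (i : Fin m) (j : Fin n) : castAdd n i ≠ natAdd m j :=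
  Fin.ne_of_val_ne (by simp only [val_castAdd, val_natAdd]; omega)

theorem Polynomial.coeff_mul_X_pow_rev {R : Type*} [Semiring R] {P : R[X]} {N t i k : ℕ}
    (hP : P.natDegree ≤ N) (hi : i < t) (hk : k < t + N) :
    (P * X ^ (t - 1 - i)).coeff (t + N - 1 - k) =
      if i ≤ k ∧ k ≤ i + N then P.coeff (N - (k - i)) else 0 := by
  rw [coeff_mul_X_pow']
  by_cases h : i ≤ k ∧ k ≤ i + N
  · rw [if_pos h, if_pos (by omega)]
    congr 1
    omega
  · rw [if_neg h]
    split_ifs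
    · exact coeff_eq_zero_of_natDegree_lt (by omega)
    · rfl

section CoefficientVectors

variable (R : Type*) [Semiring R]

noncomputable def lowerPoly (n : ℕ) : (Fin n → R) →ₗ[R] R[X] :=
  Fintype.linearCombination R fun i : Fin n => (X : R[X]) ^ (n - 1 - (i : ℕ))

noncomputable def revCoeffs (n : ℕ) : R[X] →ₗ[R] Fin n → R :=
  LinearMap.pi fun k : Fin n => lcoeff R (n - 1 - (k : ℕ))

variable {R}

theorem lowerPoly_single (n : ℕ) (i : Fin n) :
    lowerPoly R n (Pi.single i 1) = X ^ (n - 1 - (i : ℕ)) := by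
  simp [lowerPoly, Fintype.linearCombination_apply_single]

theorem revCoeffs_apply (n : ℕ) (P : R[X]) (k : Fin n) :
    revCoeffs R n P k = P.coeff (n - 1 - k) :=
  rfl

end CoefficientVectors

theorem monicOfCoeffs_eq_X_pow_add (n : ℕ) (a : Fin n → ℝ) :
    monicOfCoeffs n a = X ^ n + lowerPoly ℝ n a := by
  simp [monicOfCoeffs, lowerPoly, Fintype.linearCombination_apply, smul_eq_C_mul]

theorem natDegree_monicOfCoeffs_le (n : ℕ) (a : Fin n → ℝ) :
    (monicOfCoeffs n a).natDegree ≤ n :=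
  natDegree_add_le_of_degree_le (natDegree_X_pow_le n) <|
    natDegree_sum_le_of_forall_le _ _ fun _ _ => (natDegree_C_mul_X_pow_le _ _).trans (by omega)

theorem hasFDerivAt_coeffMulMap (p q : ℕ) (v : Fin (p + q) → ℝ) :
    HasFDerivAt (coeffMulMap p q)
      (revCoeffs ℝ (p + q) ∘ₗ
        (LinearMap.mulRight ℝ (monicOfCoeffs q (fun j => v (Fin.natAdd p j))) ∘ₗ
            lowerPoly ℝ p ∘ₗ LinearMap.funLeft ℝ ℝ (Fin.castAdd q) +
          LinearMap.mulLeft ℝ (monicOfCoeffs p (fun i => v (Fin.castAdd q i))) ∘ₗ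
            lowerPoly ℝ q ∘ₗ LinearMap.funLeft ℝ ℝ (Fin.natAdd p))).toContinuousLinearMap v := by
  have h := hasFDerivAt_linearMap_affine_mul (revCoeffs ℝ (p + q))
    (lowerPoly ℝ p ∘ₗ LinearMap.funLeft ℝ ℝ (Fin.castAdd q))
    (lowerPoly ℝ q ∘ₗ LinearMap.funLeft ℝ ℝ (Fin.natAdd p)) (X ^ p) (X ^ q) v
  simp only [LinearMap.comp_apply, ← monicOfCoeffs_eq_X_pow_add] at h
  exact h

def sylvesterRowPerm (p q : ℕ) : Equiv.Perm (Fin (p + q)) :=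
  finAddFlip.trans (finCongr (Nat.add_comm q p))

theorem sylvesterRowPerm_castAdd (p q : ℕ) (i : Fin p) :
    (sylvesterRowPerm p q (Fin.castAdd q i) : ℕ) = q + i := by
  simp [sylvesterRowPerm, Nat.add_comm]

theorem sylvesterRowPerm_natAdd (p q : ℕ) (j : Fin q) :
    (sylvesterRowPerm p q (Fin.natAdd p j) : ℕ) = j := by
  simp [sylvesterRowPerm]

theorem sylvesterMat_sylvesterRowPerm_castAdd {p q : ℕ} {P Q : ℝ[X]} (hQ : Q.natDegree ≤ q)
    (i : Fin p) :
    sylvesterMat p q P Q (sylvesterRowPerm p q (Fin.castAdd q i)) =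
      revCoeffs ℝ (p + q) (Q * X ^ (p - 1 - i)) := by
  funext k
  rw [revCoeffs_apply, coeff_mul_X_pow_rev hQ i.isLt k.isLt, sylvesterMat,
    sylvesterRowPerm_castAdd, if_neg (by omega), Nat.add_sub_cancel_left]

theorem sylvesterMat_sylvesterRowPerm_natAdd {p q : ℕ} {P Q : ℝ[X]} (hP : P.natDegree ≤ p)
    (j : Fin q) :
    sylvesterMat p q P Q (sylvesterRowPerm p q (Fin.natAdd p j)) =
      revCoeffs ℝ (p + q) (P * X ^ (q - 1 - j)) := by
  funext k
  rw [revCoeffs_apply, show p + q - 1 - (k : ℕ) = q + p - 1 - k by omega,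
    coeff_mul_X_pow_rev hP j.isLt (by omega), sylvesterMat, sylvesterRowPerm_natAdd,
    if_pos j.isLt]

theorem toMatrix'_fderiv_coeffMulMap (p q : ℕ) (v : Fin (p + q) → ℝ) :
    LinearMap.toMatrix' (fderiv ℝ (coeffMulMap p q) v).toLinearMap =
      ((sylvesterMat p q (monicOfCoeffs p (fun i => v (Fin.castAdd q i)))
        (monicOfCoeffs q (fun j => v (Fin.natAdd p j)))).submatrix (sylvesterRowPerm p q) id)ᵀ := by
  rw [(hasFDerivAt_coeffMulMap p q v).fderiv, LinearMap.coe_toContinuousLinearMap]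
  ext k l
  induction l using Fin.addCases with
  | left i =>
    rw [Matrix.transpose_apply, Matrix.submatrix_apply, id,
      sylvesterMat_sylvesterRowPerm_castAdd (natDegree_monicOfCoeffs_le _ _)]
    simp [LinearMap.funLeft_single_of_injective (Fin.castAdd_injective p q),
      LinearMap.funLeft_single_of_forall_ne (Fin.castAdd_ne_natAdd i · |>.symm),
      lowerPoly_single, mul_comm]
  | right j =>
    rw [Matrix.transpose_apply, Matrix.submatrix_apply, id,
      sylvesterMat_sylvesterRowPerm_natAdd (natDegree_monicOfCoeffs_le _ _)]
    simp [LinearMap.funLeft_single_of_injective (Fin.natAdd_injective q p),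
      LinearMap.funLeft_single_of_forall_ne (Fin.castAdd_ne_natAdd · j), lowerPoly_single]

/-- The Jacobian determinant of the coefficient multiplication map
`Φ : (a,b) ↦ coefficients of P_a Q_b` at `(a,b)` equals, up to sign, the resultant
(the determinant of the Sylvester matrix) of `P_a` and `Q_b`. -/
theorem jacobian_coeffMulMap_eq_resultant (p q : ℕ) (v : Fin (p + q) → ℝ) :
    LinearMap.det (fderiv ℝ (coeffMulMap p q) v).toLinearMap =
        (sylvesterMat p q (monicOfCoeffs p (fun i => v (Fin.castAdd q i)))
          (monicOfCoeffs q (fun j => v (Fin.natAdd p j)))).det ∨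
    LinearMap.det (fderiv ℝ (coeffMulMap p q) v).toLinearMap =
        -(sylvesterMat p q (monicOfCoeffs p (fun i => v (Fin.castAdd q i)))
          (monicOfCoeffs q (fun j => v (Fin.natAdd p j)))).det := by
  rw [← LinearMap.det_toMatrix', toMatrix'_fderiv_coeffMulMap, Matrix.det_transpose,
    Matrix.det_permute]
  rcases Int.units_eq_one_or (Equiv.Perm.sign (sylvesterRowPerm p q)) with h | h <;> simp [h]
end

section
/- Define, for s = 0, ..., d-1, the symmetric polynomial D_s(z_1,...,z_d) = Σ_{J ⊂ {1,...,d}, #J = d-s} ∏_{μ<ν, μ,ν ∈ J} (z_μ - z_ν)^2, and let D_s(c) denote its expression in the coefficients c of the monic polynomial with roots z_1,...,z_d. Then for each s, a monic complex polynomial P_c of degree d has at most s distinct complex roots if and only if D_0(c) = D_1(c) = ... = D_{d-s-1}(c) = 0. -/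
/-!
The summand of `D_j` indexed by `J` vanishes as soon as two roots indexed by `J` coincide, and
otherwise depends only on the set `z(J)`: it is the product of `(a - b)^2` over the unordered
pairs of distinct values. So if there are `k` distinct roots, every `D_j` with `d - j > k` is
zero, while `D_{d-k}` is the number of `J` on which `z` is a bijection onto the root set, times
the nonzero product of `(a - b)^2` over all pairs of distinct roots.
-/

open Polynomial Finset

/-- The generalized discriminant `D_s(z_1, ..., z_d) = ∑_{J ⊆ {1,...,d}, #J = d-s}
∏_{μ<ν ∈ J} (z_μ - z_ν)^2`, evaluated on the full root sequence. -/
noncomputable def gendisc (d s : ℕ) (z : Fin d → ℂ) : ℂ :=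
  ∑ J ∈ (Finset.univ : Finset (Fin d)).powersetCard (d - s),
    ∏ p ∈ (J ×ˢ J).filter (fun p => p.1 < p.2), (z p.1 - z p.2) ^ 2

namespace Sym2

section SqSub

variable {R : Type*} [CommRing R]

def sqSub : Sym2 R → R :=
  Sym2.lift ⟨fun a b => (a - b) ^ 2, fun a b => by ring⟩

@[simp]
theorem sqSub_mk (a b : R) : sqSub s(a, b) = (a - b) ^ 2 := rfl

theorem sqSub_eq_zero_iff [NoZeroDivisors R] {e : Sym2 R} : sqSub e = 0 ↔ e.IsDiag := by
  induction e using Sym2.ind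
  simp [sub_eq_zero]

end SqSub

variable {α β : Type*}

theorem injOn_map {f : α → β} {s : Set α} (hf : s.InjOn f) : s.sym2.InjOn (Sym2.map f) := by
  intro e he e' he'
  induction e using Sym2.ind with | _ a b => ?_
  induction e' using Sym2.ind with | _ a' b' => ?_
  simp only [Set.mk_mem_sym2_iff, map_mk, Sym2.eq_iff] at he he' ⊢
  rintro (⟨h1, h2⟩ | ⟨h1, h2⟩)
  · exact .inl ⟨hf he.1 he'.1 h1, hf he.2 he'.2 h2⟩
  · exact .inr ⟨hf he.1 he'.2 h1, hf he.2 he'.1 h2⟩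

theorem isDiag_map_iff_of_injOn {f : α → β} {s : Set α} (hf : s.InjOn f) {e : Sym2 α}
    (he : e ∈ s.sym2) : (e.map f).IsDiag ↔ e.IsDiag := by
  induction e using Sym2.ind with | _ a b => ?_
  rw [Set.mk_mem_sym2_iff] at he
  simp only [map_mk, mk_isDiag_iff]
  exact hf.eq_iff he.1 he.2

end Sym2

namespace Finset

variable {α β M : Type*}

theorem prod_sym2_filter_not_isDiag [LinearOrder α] [CommMonoid M] (s : Finset α)
    (p : Sym2 α → M) :
    ∏ i ∈ s.sym2 with ¬ i.IsDiag, p i = ∏ i ∈ s.offDiag with i.1 < i.2, p s(i.1, i.2) :=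
  sum_sym2_filter_not_isDiag (M := Additive M) s p

variable [DecidableEq α]

theorem prod_sym2_image_filter_not_isDiag [DecidableEq β] [CommMonoid M] {f : α → β}
    {s : Finset α} (hf : Set.InjOn f s) (g : Sym2 β → M) :
    ∏ e ∈ (s.image f).sym2 with ¬ e.IsDiag, g e =
      ∏ e ∈ s.sym2 with ¬ e.IsDiag, g (e.map f) := by
  rw [sym2_image, filter_image, prod_image]
  · refine prod_congr (filter_congr fun e he => ?_) fun _ _ => rfl
    rw [Sym2.isDiag_map_iff_of_injOn hf (by rw [← coe_sym2]; exact mem_coe.2 he)]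
  · refine (Sym2.injOn_map hf).mono ?_
    rw [← coe_sym2]
    exact coe_subset.2 (filter_subset _ _)

theorem prod_sym2_filter_not_isDiag_map_eq_zero [CommMonoidWithZero M] {f : α → β}
    {s : Finset α} (hf : ¬ Set.InjOn f s) {g : Sym2 β → M} (hg : ∀ b, g s(b, b) = 0) :
    ∏ e ∈ s.sym2 with ¬ e.IsDiag, g (e.map f) = 0 := by
  obtain ⟨a, ha, b, hb, hab, hne⟩ : ∃ a ∈ s, ∃ b ∈ s, f a = f b ∧ a ≠ b := by
    simpa [Set.InjOn] using hf
  refine prod_eq_zero (i := s(a, b)) ?_ ?_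
  · simp [ha, hb, hne]
  · simp [hab, hg]

end Finset

open Sym2

theorem gendisc_eq_sum_prod_sqSub (d j : ℕ) (z : Fin d → ℂ) :
    gendisc d j z =
      ∑ J ∈ (univ : Finset (Fin d)).powersetCard (d - j),
        ∏ e ∈ J.sym2 with ¬ e.IsDiag, sqSub (e.map z) := by
  refine sum_congr rfl fun J _ => ?_
  rw [prod_sym2_filter_not_isDiag]
  congr 1
  ext p
  simp only [mem_filter, mem_product, mem_offDiag]
  grind

theorem gendisc_eq_zero_of_card_image_lt {d j : ℕ} {z : Fin d → ℂ}
    (h : #(univ.image z) < d - j) : gendisc d j z = 0 := by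
  rw [gendisc_eq_sum_prod_sqSub]
  refine sum_eq_zero fun J hJ => prod_sym2_filter_not_isDiag_map_eq_zero (fun hinj => ?_) (by simp)
  have := card_le_card_of_injOn z (fun i _ => mem_image_of_mem z (mem_univ i)) hinj
  rw [(mem_powersetCard.1 hJ).2] at this
  omega

theorem gendisc_sub_card_image_ne_zero (d : ℕ) (z : Fin d → ℂ) :
    gendisc d (d - #(univ.image z)) z ≠ 0 := by
  classical
  set S := univ.image z
  have hSd : #S ≤ d := card_image_le.trans (by simp)
  have hterm : ∀ J ∈ (univ : Finset (Fin d)).powersetCard #S,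
      ∏ e ∈ J.sym2 with ¬ e.IsDiag, sqSub (e.map z) =
        if Set.InjOn z J then ∏ e ∈ S.sym2 with ¬ e.IsDiag, sqSub e else 0 := by
    intro J hJ
    split_ifs with hinj
    · have himage : J.image z = S :=
        eq_of_subset_of_card_le (image_subset_image (subset_univ J))
          (by rw [card_image_of_injOn hinj, (mem_powersetCard.1 hJ).2])
      rw [← himage, prod_sym2_image_filter_not_isDiag hinj]
    · exact prod_sym2_filter_not_isDiag_map_eq_zero hinj (by simp)
  have hsection : (((univ : Finset (Fin d)).powersetCard #S).filter
      fun J : Finset (Fin d) => Set.InjOn z J).Nonempty := by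
    obtain ⟨J, -, hinj, himage⟩ :=
      exists_subset_injOn_image_eq_of_surjOn (f := z) Set.univ S (by simp [S, Set.SurjOn])
    refine ⟨J, mem_filter.2 ⟨mem_powersetCard.2 ⟨subset_univ J, ?_⟩, hinj⟩⟩
    rw [← himage, card_image_of_injOn hinj]
  rw [gendisc_eq_sum_prod_sqSub, Nat.sub_sub_self hSd, sum_congr rfl hterm, sum_ite,
    sum_const_zero, add_zero, sum_const, nsmul_eq_mul]
  refine mul_ne_zero (Nat.cast_ne_zero.2 hsection.card_pos.ne') (prod_ne_zero_iff.2 fun e he => ?_)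
  exact sqSub_eq_zero_iff.not.2 (mem_filter.1 he).2

theorem gendisc_char_distinct_roots_general (d s : ℕ) (z : Fin d → ℂ) :
    ((Finset.univ : Finset (Fin d)).image z).card ≤ s ↔
      ∀ j < d - s, gendisc d j z = 0 := by
  have hk : #(univ.image z) ≤ d := card_image_le.trans (by simp)
  refine ⟨fun hs j hj => gendisc_eq_zero_of_card_image_lt (by omega), fun h => ?_⟩
  by_contra! hs
  exact gendisc_sub_card_image_ne_zero d z (h _ (by omega))

/-- A monic complex polynomial of degree `d` with root sequence `z` (with multiplicity)
has at most `s` distinct roots if and only if the generalized discriminants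
`D_0, ..., D_{d-s-1}` all vanish on its coefficients. -/
theorem gendisc_char_distinct_roots (d s : ℕ) (hs : s < d) (c : Fin d → ℂ)
    (z : Fin d → ℂ)
    (hz : Polynomial.X ^ d + ∑ i : Fin d, Polynomial.C (c i) *
        Polynomial.X ^ (d - 1 - (i : ℕ)) =
      ∏ i : Fin d, (Polynomial.X - Polynomial.C (z i))) :
    ((Finset.univ : Finset (Fin d)).image z).card ≤ s ↔
      ∀ j < d - s, gendisc d j z = 0 :=
  gendisc_char_distinct_roots_general d s z
end

section
/- Let P_c be a monic complex polynomial of degree d with exactly s distinct roots z_1, ..., z_s of multiplicities ν_1, ..., ν_s, and let P̃(z) = ∏_{i=1}^s (z - z_i) be its square-free part with discriminant D P̃. Then ν_1 ⋯ ν_s · D P̃ = D_{d-s}(c), where D_{d-s} is the generalized discriminant. -/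
open Polynomial Finset

lemma roots_multiset_eq {d s : ℕ} (w : Fin s → ℂ) (ν : Fin s → ℕ) (z : Fin d → ℂ)
    (hz : ∏ i : Fin d, (Polynomial.X - Polynomial.C (z i)) =
      ∏ i : Fin s, (Polynomial.X - Polynomial.C (w i)) ^ (ν i)) :
    Multiset.map z Finset.univ.val
      = (Finset.univ.val : Multiset (Fin s)).bind (fun j => ν j • {w j}) := by
  have h1 : (∏ i : Fin d, (X - C (z i))).roots = Multiset.map z Finset.univ.val := by
    have : ∏ i : Fin d, (X - C (z i))
        = ((Multiset.map z Finset.univ.val).map fun a => X - C a).prod := by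
      rw [Multiset.map_map]; rfl
    rw [this, roots_multiset_prod_X_sub_C]
  have hne : (∏ i : Fin s, (X - C (w i)) ^ ν i) ≠ 0 := by
    apply Monic.ne_zero
    exact monic_prod_of_monic _ _ fun i _ => (monic_X_sub_C (w i)).pow _
  have h2 : (∏ i : Fin s, (X - C (w i)) ^ ν i).roots
      = (Finset.univ.val : Multiset (Fin s)).bind (fun j => ν j • {w j}) := by
    rw [roots_prod _ _ hne]
    congr 1
    funext j
    rw [roots_pow, roots_X_sub_C]
  rw [← h1, hz, h2]

/-- If a monic complex polynomial of degree `d` has exactly `s` distinct roots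
`w_1, ..., w_s` of multiplicities `ν_1, ..., ν_s`, and `z` is its full root sequence,
then `ν_1 ⋯ ν_s · D P̃ = D_{d-s}(c)`, where `D P̃ = ∏_{i<j} (w_i - w_j)^2` is the
discriminant of the square-free part. -/
theorem gendisc_of_squarefree_part (d s : ℕ) (w : Fin s → ℂ)
    (hw : Function.Injective w) (ν : Fin s → ℕ) (hν : ∀ i, 1 ≤ ν i)
    (hsum : ∑ i, ν i = d) (z : Fin d → ℂ)
    (hz : ∏ i : Fin d, (Polynomial.X - Polynomial.C (z i)) =
      ∏ i : Fin s, (Polynomial.X - Polynomial.C (w i)) ^ (ν i)) :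
    (∏ i, (ν i : ℂ)) *
        ∏ p ∈ ((Finset.univ : Finset (Fin s)) ×ˢ Finset.univ).filter
          (fun p => p.1 < p.2), (w p.1 - w p.2) ^ 2 =
      gendisc d (d - s) z := by
  classical
  have hsd : s ≤ d := by
    calc s = ∑ _i : Fin s, 1 := by simp
    _ ≤ ∑ i, ν i := Finset.sum_le_sum fun i _ => hν i
    _ = d := hsum
  have hM := roots_multiset_eq w ν z hz
  -- construct f : Fin d → Fin s with z = w ∘ f
  have hex : ∀ i, ∃ j, z i = w j := by
    intro i
    have hmem : z i ∈ Multiset.map z Finset.univ.val :=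
      Multiset.mem_map_of_mem _ (mem_univ i)
    rw [hM] at hmem
    rcases Multiset.mem_bind.mp hmem with ⟨j, _, hj⟩
    rcases Multiset.mem_nsmul.mp hj with ⟨_, hj'⟩
    exact ⟨j, Multiset.mem_singleton.mp hj'⟩
  choose f hf using hex
  -- fiber cardinalities
  have hcard : ∀ j, (univ.filter (fun i => f i = j)).card = ν j := by
    intro j
    have hL : Multiset.count (w j) (Multiset.map z Finset.univ.val)
        = (univ.filter (fun i => f i = j)).card := by
      have hzz : Multiset.map z (Finset.univ.val : Multiset (Fin d))
          = Multiset.map w (Multiset.map f Finset.univ.val) := by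
        rw [Multiset.map_map]
        exact Multiset.map_congr rfl fun i _ => hf i
      rw [hzz, Multiset.count_map_eq_count' w _ hw, Multiset.count_map]
      rw [Finset.card_filter]
      simp only [Finset.sum_boole]
      rw [Finset.filter_congr (fun i _ => by rw [eq_comm])]
      rfl
    have hR : Multiset.count (w j) ((Finset.univ.val : Multiset (Fin s)).bind
        (fun k => ν k • {w k})) = ν j := by
      rw [Multiset.count_bind]
      have : ∀ k : Fin s, Multiset.count (w j) (ν k • ({w k} : Multiset ℂ))
          = if k = j then ν k else 0 := by
        intro k
        rw [Multiset.count_nsmul, Multiset.count_singleton]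
        by_cases h : k = j
        · simp [h]
        · have : w j ≠ w k := fun he => h (hw he.symm)
          simp [h, this]
      calc ((Finset.univ.val : Multiset (Fin s)).map
            fun k => Multiset.count (w j) (ν k • ({w k} : Multiset ℂ))).sum
          = ∑ k : Fin s, if k = j then ν k else 0 := by
            rw [Finset.sum]; exact congrArg _ (Multiset.map_congr rfl fun k _ => this k)
        _ = ν j := by rw [Finset.sum_ite_eq' univ j ν]; simp
    rw [← hL, hM, hR]
  -- abbreviations
  set disc : ℂ := ∏ p ∈ ((Finset.univ : Finset (Fin s)) ×ˢ Finset.univ).filter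
      (fun p => p.1 < p.2), (w p.1 - w p.2) ^ 2 with hdisc
  unfold gendisc
  rw [Nat.sub_sub_self hsd]
  rw [← Finset.sum_filter_add_sum_filter_not ((Finset.univ : Finset (Fin d)).powersetCard s)
    (fun (J : Finset (Fin d)) => Set.InjOn f ↑J)]
  -- bad terms vanish
  have hbad : ∑ J ∈ Finset.filter (fun (J : Finset (Fin d)) => ¬ Set.InjOn f ↑J)
      ((Finset.univ : Finset (Fin d)).powersetCard s),
      ∏ p ∈ Finset.filter (fun p => p.1 < p.2) (J ×ˢ J), (z p.1 - z p.2) ^ 2 = 0 := by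
    apply Finset.sum_eq_zero
    intro J hJ
    rw [mem_filter] at hJ
    obtain ⟨-, hJ2⟩ := hJ
    rw [Set.InjOn] at hJ2
    push_neg at hJ2
    obtain ⟨a, ha, b, hb, hab, hne⟩ := hJ2
    have hzab : z a = z b := by rw [hf a, hf b, hab]
    rcases lt_or_gt_of_ne hne with h | h
    · refine Finset.prod_eq_zero (i := (a, b)) ?_ ?_
      · rw [mem_filter, mem_product]; exact ⟨⟨ha, hb⟩, h⟩
      · simp [hzab]
    · refine Finset.prod_eq_zero (i := (b, a)) ?_ ?_
      · rw [mem_filter, mem_product]; exact ⟨⟨hb, ha⟩, h⟩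
      · simp [hzab]
  rw [hbad, add_zero]
  -- good terms all equal disc
  have hgood : ∀ J ∈ Finset.filter (fun (J : Finset (Fin d)) => Set.InjOn f ↑J)
      ((Finset.univ : Finset (Fin d)).powersetCard s),
      ∏ p ∈ Finset.filter (fun p => p.1 < p.2) (J ×ˢ J), (z p.1 - z p.2) ^ 2 = disc := by
    intro J hJ
    rw [mem_filter, Finset.mem_powersetCard_univ] at hJ
    obtain ⟨hJcard, hJinj⟩ := hJ
    have himg : J.image f = univ := by
      apply Finset.eq_univ_of_card
      rw [Finset.card_image_of_injOn hJinj, hJcard, Fintype.card_fin]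
    have hgex : ∀ j : Fin s, ∃ a, a ∈ J ∧ f a = j := by
      intro j
      have : j ∈ J.image f := himg ▸ mem_univ j
      simpa [Finset.mem_image] using this
    choose g hgJ hgf using hgex
    have hgfa : ∀ a ∈ J, g (f a) = a := fun a ha => hJinj (hgJ _) ha (hgf _)
    rw [hdisc]
    refine (Finset.prod_nbij'
      (fun p => if g p.1 < g p.2 then (g p.1, g p.2) else (g p.2, g p.1))
      (fun p => if f p.1 < f p.2 then (f p.1, f p.2) else (f p.2, f p.1))
      ?_ ?_ ?_ ?_ ?_).symm
    · rintro ⟨i, j⟩ hij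
      rw [mem_filter, mem_product] at hij
      obtain ⟨-, hlt⟩ := hij
      have hne : g i ≠ g j := fun he => absurd (by rw [← hgf i, he, hgf j]) hlt.ne
      rcases hne.lt_or_gt with h | h
      · simp only [if_pos h, mem_filter, mem_product]; exact ⟨⟨hgJ i, hgJ j⟩, h⟩
      · simp only [if_neg (not_lt.mpr h.le), mem_filter, mem_product]
        exact ⟨⟨hgJ j, hgJ i⟩, h⟩
    · rintro ⟨a, b⟩ hab
      rw [mem_filter, mem_product] at hab
      obtain ⟨⟨ha, hb⟩, hlt⟩ := hab
      have hne : f a ≠ f b := fun he => hlt.ne (hJinj ha hb he)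
      rcases hne.lt_or_gt with h | h
      · simp only [if_pos h, mem_filter, mem_product]
        exact ⟨⟨mem_univ _, mem_univ _⟩, h⟩
      · simp only [if_neg (not_lt.mpr h.le), mem_filter, mem_product]
        exact ⟨⟨mem_univ _, mem_univ _⟩, h⟩
    · rintro ⟨i, j⟩ hij
      rw [mem_filter, mem_product] at hij
      obtain ⟨-, hlt⟩ := hij
      have hne : g i ≠ g j := fun he => absurd (by rw [← hgf i, he, hgf j]) hlt.ne
      rcases hne.lt_or_gt with h | h
      · simp only [if_pos h, hgf, if_pos hlt]
      · simp only [if_neg (not_lt.mpr h.le), hgf, if_neg (not_lt.mpr hlt.le)]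
    · rintro ⟨a, b⟩ hab
      rw [mem_filter, mem_product] at hab
      obtain ⟨⟨ha, hb⟩, hlt⟩ := hab
      have hne : f a ≠ f b := fun he => hlt.ne (hJinj ha hb he)
      rcases hne.lt_or_gt with h | h
      · simp only [if_pos h, hgfa a ha, hgfa b hb, if_pos hlt]
      · simp only [if_neg (not_lt.mpr h.le), hgfa a ha, hgfa b hb,
          if_neg (not_lt.mpr hlt.le)]
    · rintro ⟨i, j⟩ hij
      rcases lt_or_ge (g i) (g j) with h | h
      · simp only [if_pos h, hf (g i), hf (g j), hgf]
      · have : ¬ g i < g j := not_lt.mpr h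
        simp only [if_neg this, hf (g i), hf (g j), hgf]
        ring
  rw [Finset.sum_congr rfl hgood, Finset.sum_const]
  -- count the good subsets
  have hcardgood : (((Finset.univ : Finset (Fin d)).powersetCard s).filter
      (fun (J : Finset (Fin d)) => Set.InjOn f ↑J)).card = ∏ j, ν j := by
    have hbij : (Finset.univ : Finset (∀ j : Fin s, {a : Fin d // f a = j})).card
        = (((Finset.univ : Finset (Fin d)).powersetCard s).filter
          (fun (J : Finset (Fin d)) => Set.InjOn f ↑J)).card := by
      refine Finset.card_bij
        (fun G _ => Finset.image (fun j => (G j).1) Finset.univ) ?_ ?_ ?_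
      · intro G _
        have hinj : Function.Injective (fun j => (G j).1) := by
          intro j₁ j₂ he
          have h1 := (G j₁).2
          have h2 := (G j₂).2
          rw [← h1, ← h2]
          exact congrArg f he
        rw [mem_filter, Finset.mem_powersetCard_univ]
        refine ⟨?_, ?_⟩
        · rw [Finset.card_image_of_injective _ hinj, Finset.card_univ, Fintype.card_fin]
        · intro a ha b hb hab
          simp only [Finset.coe_image, Set.mem_image] at ha hb
          obtain ⟨j₁, -, rfl⟩ := ha
          obtain ⟨j₂, -, rfl⟩ := hb
          have : j₁ = j₂ := by rw [← (G j₁).2, ← (G j₂).2, hab]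
          rw [this]
      · intro G₁ _ G₂ _ he
        have he' : Finset.image (fun j => (G₁ j).1) Finset.univ
            = Finset.image (fun j => (G₂ j).1) Finset.univ := he
        funext j
        have : (G₁ j).1 ∈ Finset.image (fun j => (G₂ j).1) Finset.univ := by
          rw [← he']; exact Finset.mem_image_of_mem _ (mem_univ j)
        rcases Finset.mem_image.mp this with ⟨j', -, hj'⟩
        have : j' = j := by rw [← (G₂ j').2, hj', (G₁ j).2]
        exact Subtype.ext (by rw [← hj', this])
      · intro J hJ
        rw [mem_filter, Finset.mem_powersetCard_univ] at hJ
        obtain ⟨hJcard, hJinj⟩ := hJ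
        have himg : J.image f = univ := by
          apply Finset.eq_univ_of_card
          rw [Finset.card_image_of_injOn hJinj, hJcard, Fintype.card_fin]
        have hgex : ∀ j : Fin s, ∃ a, a ∈ J ∧ f a = j := by
          intro j
          have : j ∈ J.image f := himg ▸ mem_univ j
          simpa [Finset.mem_image] using this
        choose g hgJ hgf using hgex
        refine ⟨fun j => ⟨g j, hgf j⟩, mem_univ _, ?_⟩
        have hsub : Finset.image (fun j => g j) Finset.univ ⊆ J := by
          intro a ha
          rcases Finset.mem_image.mp ha with ⟨j, -, rfl⟩
          exact hgJ j
        have hginj : Function.Injective g := by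
          intro j₁ j₂ he
          rw [← hgf j₁, ← hgf j₂, he]
        refine Finset.eq_of_subset_of_card_le hsub ?_
        rw [Finset.card_image_of_injective _ hginj, Finset.card_univ, Fintype.card_fin,
          hJcard]
    rw [← hbij, Finset.card_univ, Fintype.card_pi]
    congr 1
    funext j
    rw [Fintype.card_subtype, hcard j]
  rw [hcardgood, nsmul_eq_mul, Nat.cast_prod]
end
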